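/- With $c_j(\alpha) = \frac{1}{j!}\sum_{m=0}^{j} \binom{j}{m} \frac{(\alpha+1/2)_m (\alpha)_m (-\alpha)_{j-m}}{(1/2)_m}$ and $\alpha \in (0,1)$, one has $c_j(\alpha) \geq 0$ for every $j \geq 1$. -/

import Mathlib

/-!
Write `P m = (α)_m`, `Q k = (-α)_k` and `R m = (α+1/2)_m / (1/2)_m`, so that
`j! c_j(α) = ∑_m (j choose m) R m · P m Q (j-m)`. By Vandermonde, the same sum without the
factor `R m` is `(α - α)_j = 0`. For `α ∈ (0,1)` every term with `m < j` has `Q (j-m) ≤ 0`,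
and `R` is nondecreasing, so replacing each `R m` by the larger `R j` can only decrease the sum,
which then becomes `R j · 0 = 0`.
-/

open Finset

/-- The coefficient `c_j(α)` from the expansion of
`(1-v)^α ₂F₁(1/2+α, α, 1/2; v)`. -/
noncomputable def cCoeff (j : ℕ) (α : ℝ) : ℝ :=
  (1 / (j.factorial : ℝ)) *
    ∑ m ∈ Finset.range (j + 1),
      (j.choose m : ℝ) *
        ((ascPochhammer ℝ m).eval (α + 1 / 2) * (ascPochhammer ℝ m).eval α *
            (ascPochhammer ℝ (j - m)).eval (-α) / (ascPochhammer ℝ m).eval (1 / 2))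

open Polynomial

theorem ascPochhammer_eval_add {S : Type*} [CommSemiring S] (x y : S) (k : ℕ) :
    (ascPochhammer S k).eval (x + y) = ∑ ij ∈ antidiagonal k,
      (k.choose ij.1 : S) * ((ascPochhammer S ij.1).eval x * (ascPochhammer S ij.2).eval y) := by
  induction k with
  | zero => simp
  | succ k ih =>
    rw [ascPochhammer_succ_eval, ih, sum_antidiagonal_choose_succ_mul
        (fun i j => (ascPochhammer S i).eval x * (ascPochhammer S j).eval y) k,
      sum_mul, ← sum_add_distrib]
    refine sum_congr rfl fun ij hij => ?_
    have h : ij.1 + ij.2 = k := mem_antidiagonal.mp hij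
    rw [ascPochhammer_succ_eval, ascPochhammer_succ_eval, ← Nat.choose_symm_of_eq_add h.symm,
      ← h, Nat.cast_add]
    ring

theorem sum_choose_mul_ascPochhammer_eval_mul_eval_neg {R : Type*} [CommRing R] (x : R)
    {j : ℕ} (hj : j ≠ 0) :
    ∑ m ∈ range (j + 1), (j.choose m : R) *
      ((ascPochhammer R m).eval x * (ascPochhammer R (j - m)).eval (-x)) = 0 := by
  have h := ascPochhammer_eval_add x (-x) j
  rw [Nat.sum_antidiagonal_eq_sum_range_succ_mk, add_neg_cancel, ascPochhammer_eval_zero,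
    if_neg hj] at h
  exact h.symm

theorem ascPochhammer_eval_neg_nonpos {K : Type*} [CommRing K] [PartialOrder K]
    [IsOrderedRing K] {α : K} (hα₀ : 0 ≤ α) (hα₁ : α ≤ 1) {k : ℕ} (hk : 1 ≤ k) :
    (ascPochhammer K k).eval (-α) ≤ 0 := by
  induction k, hk using Nat.le_induction with
  | base => simpa using hα₀
  | succ k hk ih =>
    have hαk : α ≤ k := hα₁.trans (Nat.cast_one (R := K) ▸ Nat.mono_cast hk)
    rw [ascPochhammer_succ_eval]
    exact mul_nonpos_of_nonpos_of_nonneg ih (by rwa [neg_add_eq_sub, sub_nonneg])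

theorem monotone_ascPochhammer_eval_div {K : Type*} [Field K] [LinearOrder K]
    [IsStrictOrderedRing K] {a b : K} (hb : 0 < b) (hba : b ≤ a) :
    Monotone fun m => (ascPochhammer K m).eval a / (ascPochhammer K m).eval b := by
  refine monotone_nat_of_le_succ fun m => ?_
  have ha_pos := ascPochhammer_pos m a (hb.trans_le hba)
  have hb_pos := ascPochhammer_pos m b hb
  have hbm : 0 < b + m := by positivity
  simp only [ascPochhammer_succ_eval]
  rw [div_le_div_iff₀ hb_pos (mul_pos hb_pos hbm)]
  nlinarith [mul_pos ha_pos hb_pos]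

theorem mul_sum_range_le_sum_mul_of_monotone {K : Type*} [CommRing K] [PartialOrder K]
    [IsOrderedRing K] {R w : ℕ → K} (hR : Monotone R) {j : ℕ} (hw : ∀ m < j, w m ≤ 0) :
    R j * ∑ m ∈ range (j + 1), w m ≤ ∑ m ∈ range (j + 1), R m * w m := by
  rw [mul_sum]
  refine sum_le_sum fun m hm => ?_
  obtain hmj | rfl := (Nat.lt_succ_iff.mp (mem_range.mp hm)).lt_or_eq
  · exact mul_le_mul_of_nonpos_right (hR hmj.le) (hw m hmj)
  · exact le_rfl

theorem stmt12 (α : ℝ) (hα : α ∈ Set.Ioo (0 : ℝ) 1) (j : ℕ) (hj : 1 ≤ j) :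
    0 ≤ cCoeff j α := by
  obtain ⟨hα₀, hα₁⟩ := hα
  set R : ℕ → ℝ := fun m =>
    (ascPochhammer ℝ m).eval (α + 1 / 2) / (ascPochhammer ℝ m).eval (1 / 2)
  set w : ℕ → ℝ := fun m => (j.choose m : ℝ) *
    ((ascPochhammer ℝ m).eval α * (ascPochhammer ℝ (j - m)).eval (-α))
  have hR : Monotone R := monotone_ascPochhammer_eval_div (by norm_num) (by linarith)
  have hw : ∀ m < j, w m ≤ 0 := fun m hm =>
    mul_nonpos_of_nonneg_of_nonpos (by positivity) <|
      mul_nonpos_of_nonneg_of_nonpos (ascPochhammer_pos m α hα₀).le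
        (ascPochhammer_eval_neg_nonpos hα₀.le hα₁.le (by omega))
  have hsum : ∑ m ∈ range (j + 1), w m = 0 :=
    sum_choose_mul_ascPochhammer_eval_mul_eval_neg α (by omega)
  unfold cCoeff
  refine mul_nonneg (by positivity) ?_
  calc (0 : ℝ) = R j * ∑ m ∈ range (j + 1), w m := by rw [hsum, mul_zero]
    _ ≤ ∑ m ∈ range (j + 1), R m * w m := mul_sum_range_le_sum_mul_of_monotone hR hw
    _ = _ := sum_congr rfl fun m _ => by simp only [R, w]; ring
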